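/- arXiv:math-ph/0404019 — 2 statements merged into one kernel-verified Lean document; each statement's English description precedes it below -/
import Mathlib

section
/- (Wigner–Eckart theorem, simply reducible case.) Let A be a Hopf algebra over an algebraically closed field k, let V and W be finite-dimensional simple A-modules, and suppose V ⊗ W (with the tensor-product A-action) is the internal direct sum of pairwise non-isomorphic simple A-submodules W^1, …, W^M (each simple constituent occurring exactly once). Fix bases {e_m^V} of V, {e_n^W} of W and {e_l^K} of each W^K, and let λ_l^K(m,n) ∈ k be the Clebsch–Gordan coefficients defined by e_m^V ⊗ e_n^W = Σ_K Σ_l λ_l^K(m,n) e_l^K. If T : V → Hom_k(W, W^L) (L ∈ {1,…,M}) is a tensor operator (an A-module homomorphism for the δ-action on Hom_k(W, W^L)), then there exists a single scalar α ∈ k (the reduced matrix element), independent of l, m, n, such that the matrix elements of the components T(e_m^V), defined by T(e_m^V)(e_n^W) = Σ_l T(e_m^V)_{ln} e_l^L, satisfy T(e_m^V)_{ln} = α λ_l^L(m,n), i.e. they are proportional to the Clebsch–Gordan coefficients. -/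
open TensorProduct

section TensorModule

theorem smulCommClass_of_tower (k A X : Type*) [Field k] [Ring A] [Algebra k A]
    [AddCommGroup X] [Module k X] [Module A X]
    [IsScalarTower k A X] : SMulCommClass A k X :=
  ⟨fun a c v => by
    rw [← algebraMap_smul A c v, ← mul_smul, ← Algebra.commutes c a, mul_smul, algebraMap_smul]⟩

variable (k A V W : Type*) [Field k] [Ring A] [HopfAlgebra k A]
  [AddCommGroup V] [Module k V] [Module A V] [IsScalarTower k A V]
  [AddCommGroup W] [Module k W] [Module A W] [IsScalarTower k A W]

/-- `TensorMod k A V W` is the tensor product `V ⊗[k] W` of two left `A`-modules over the Hopf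
algebra `A`, regarded as a left `A`-module via the tensor-product action
`a • (v ⊗ w) = ∑ᵢ (a_i^{(1)} • v) ⊗ (a_i^{(2)} • w)`, where `Δ a = ∑ᵢ a_i^{(1)} ⊗ a_i^{(2)}`. -/
def TensorMod (k A V W : Type*) [Field k] [Ring A] [HopfAlgebra k A]
    [AddCommGroup V] [Module k V] [Module A V] [IsScalarTower k A V]
    [AddCommGroup W] [Module k W] [Module A W] [IsScalarTower k A W] :=
  V ⊗[k] W

noncomputable instance : AddCommGroup (TensorMod k A V W) := inferInstanceAs (AddCommGroup (V ⊗[k] W))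
noncomputable instance : Module k (TensorMod k A V W) := inferInstanceAs (Module k (V ⊗[k] W))

/-- The tensor-product representation of the Hopf algebra `A` on `V ⊗[k] W`:
`a` acts by `∑ᵢ (a_i^{(1)} • ·) ⊗ (a_i^{(2)} • ·)`. -/
noncomputable def tensorRep : A →ₐ[k] Module.End k (V ⊗[k] W) :=
  haveI := smulCommClass_of_tower k A V
  haveI := smulCommClass_of_tower k A W
  (Module.endTensorEndAlgHom (R := k) (S := k) (A := k) (M := V) (N := W)).comp
    ((Algebra.TensorProduct.map (Algebra.lsmul k k V) (Algebra.lsmul k k W)).comp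
      (Bialgebra.comulAlgHom k A))

/-- The tensor-product action of `A` makes `TensorMod k A V W` a left `A`-module. -/
noncomputable instance : Module A (TensorMod k A V W) where
  smul a x := tensorRep k A V W a x
  one_smul x := by
    show tensorRep k A V W 1 x = x
    rw [map_one]; rfl
  mul_smul a b x := by
    show tensorRep k A V W (a * b) x = tensorRep k A V W a (tensorRep k A V W b x)
    rw [map_mul]; rfl
  smul_zero a := map_zero (tensorRep k A V W a)
  smul_add a x y := map_add (tensorRep k A V W a) x y
  add_smul a b x := by
    show tensorRep k A V W (a + b) x = tensorRep k A V W a x + tensorRep k A V W b x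
    rw [map_add]; rfl
  zero_smul x := by
    show tensorRep k A V W 0 x = 0
    rw [map_zero]; rfl

instance : IsScalarTower k A (TensorMod k A V W) :=
  ⟨fun c a x => by
    show tensorRep k A V W (c • a) x = c • tensorRep k A V W a x
    rw [map_smul]
    rfl⟩

/-- The pure tensor `v ⊗ w`, as an element of the `A`-module `TensorMod k A V W`. -/
noncomputable def tmul' (v : V) (w : W) : TensorMod k A V W := v ⊗ₜ[k] w

end TensorModule

/-- The action `δ` of the Hopf algebra `A` on `Hom_k(W, U)`, for left `A`-modules `W` and `U`,
given by `(δ(a)(f))(w) = ∑ᵢ a_i^{(1)} • f (S(a_i^{(2)}) • w)`. -/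
noncomputable def deltaAction (k A W U : Type*) [Field k] [Ring A] [HopfAlgebra k A]
    [AddCommGroup W] [Module k W] [Module A W] [IsScalarTower k A W]
    [AddCommGroup U] [Module k U] [Module A U] [IsScalarTower k A U] :
    A →ₗ[k] Module.End k (W →ₗ[k] U) :=
  haveI := smulCommClass_of_tower k A W
  haveI := smulCommClass_of_tower k A U
  (TensorProduct.lift
    (((LinearMap.llcomp k (W →ₗ[k] U) (W →ₗ[k] U) (W →ₗ[k] U)).comp
        ((LinearMap.llcomp k W U U) ∘ₗ (Algebra.lsmul k k U).toLinearMap)).compl₂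
      ((LinearMap.llcomp k W W U).flip ∘ₗ (Algebra.lsmul k k W).toLinearMap ∘ₗ
        HopfAlgebra.antipode (R := k)))) ∘ₗ
    Coalgebra.comul (R := k)

section Helpers

open Coalgebra HopfAlgebra

variable {k A V W U : Type*} [Field k] [Ring A] [HopfAlgebra k A]
  [AddCommGroup V] [Module k V] [Module A V] [IsScalarTower k A V]
  [AddCommGroup W] [Module k W] [Module A W] [IsScalarTower k A W]
  [AddCommGroup U] [Module k U] [Module A U] [IsScalarTower k A U]

lemma smul_tmul_repr (a : A) (v : V) (w : W) (r : Coalgebra.Repr k a (A × A)) :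
    a • (tmul' k A V W v w) =
      ∑ i ∈ r.index, tmul' k A V W (r.left i • v) (r.right i • w) := by
  show tensorRep k A V W a (v ⊗ₜ[k] w) = _
  rw [tensorRep]
  simp only [AlgHom.coe_comp, Function.comp_apply, Bialgebra.comulAlgHom_apply]
  rw [← r.eq]
  simp only [map_sum, Algebra.TensorProduct.map_tmul, Module.endTensorEndAlgHom_apply,
    LinearMap.sum_apply, TensorProduct.map_tmul]
  rfl

lemma deltaAction_repr (b : A) (s : Coalgebra.Repr k b (A × A)) (f : W →ₗ[k] U) (w : W) :
    deltaAction k A W U b f w =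
      ∑ j ∈ s.index, s.left j • f (HopfAlgebra.antipode (R := k) (s.right j) • w) := by
  rw [deltaAction]
  simp only [LinearMap.coe_comp, Function.comp_apply]
  rw [← s.eq]
  simp only [map_sum, TensorProduct.lift.tmul, LinearMap.sum_apply]
  rfl

open TensorProduct in
lemma lift_T_smul (T : V →ₗ[k] W →ₗ[k] U)
    (hT : ∀ (a : A) (v : V), T (a • v) = deltaAction k A W U a (T v))
    (a : A) (x : TensorMod k A V W) :
    TensorProduct.lift T (a • x) = a • TensorProduct.lift T x := by
  haveI := smulCommClass_of_tower k A W
  haveI := smulCommClass_of_tower k A U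
  have hext : (TensorProduct.lift T) ∘ₗ (tensorRep k A V W a : Module.End k (V ⊗[k] W)) =
      ((Algebra.lsmul k k U a : Module.End k U) ∘ₗ (TensorProduct.lift T)) := by
    apply TensorProduct.ext'
    intro v w
    show TensorProduct.lift T (a • tmul' k A V W v w) = a • TensorProduct.lift T (v ⊗ₜ[k] w)
    set r : Coalgebra.Repr k a (A × A) := ℛ k a with hr
    set s : (i : A × A) → Coalgebra.Repr k (r.left i) (A × A) := fun i => ℛ k (r.left i) with hs
    set t : (i : A × A) → Coalgebra.Repr k (r.right i) (A × A) := fun i => ℛ k (r.right i) with ht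
    -- the auxiliary trilinear map G
    let smulw : A →ₗ[k] W := (LinearMap.flip (Algebra.lsmul k k W).toLinearMap) w
    let g : A ⊗[k] A →ₗ[k] U :=
      (T v) ∘ₗ smulw ∘ₗ (LinearMap.mul' k A) ∘ₗ
        (LinearMap.rTensor A (HopfAlgebra.antipode (R := k)))
    let actU : A ⊗[k] U →ₗ[k] U := TensorProduct.lift ((Algebra.lsmul k k U).toLinearMap)
    let G : A ⊗[k] (A ⊗[k] A) →ₗ[k] U := actU ∘ₗ (LinearMap.lTensor A g)
    have hG : ∀ (b c d : A), G (b ⊗ₜ[k] (c ⊗ₜ[k] d)) =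
        b • (T v) ((HopfAlgebra.antipode (R := k) c * d) • w) := by
      intro b c d
      simp [G, actU, g, smulw, mul_smul]
    have key := congrArg G (Coalgebra.sum_tmul_tmul_eq r s t)
    simp only [map_sum, hG] at key
    calc TensorProduct.lift T (a • tmul' k A V W v w)
        = ∑ i ∈ r.index, T (r.left i • v) (r.right i • w) := by
          rw [smul_tmul_repr a v w r]
          exact (map_sum (TensorProduct.lift T) (fun i => (r.left i • v) ⊗ₜ[k] (r.right i • w))
            r.index).trans (Finset.sum_congr rfl fun i _ => by rw [TensorProduct.lift.tmul])
      _ = ∑ i ∈ r.index, ∑ j ∈ (s i).index,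
            (s i).left j • (T v)
              ((HopfAlgebra.antipode (R := k) ((s i).right j) * r.right i) • w) := by
          refine Finset.sum_congr rfl fun i _ => ?_
          rw [hT, deltaAction_repr _ (s i)]
          exact Finset.sum_congr rfl fun j _ => by rw [mul_smul]
      _ = ∑ i ∈ r.index, ∑ j ∈ (t i).index,
            r.left i • (T v)
              ((HopfAlgebra.antipode (R := k) ((t i).left j) * (t i).right j) • w) := key
      _ = ∑ i ∈ r.index, Coalgebra.counit (R := k) (r.right i) • (r.left i • (T v w)) := by
          refine Finset.sum_congr rfl fun i _ => ?_
          rw [← Finset.smul_sum, ← map_sum, ← Finset.sum_smul,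
            HopfAlgebra.sum_antipode_mul_eq_algebraMap_counit (t i), algebraMap_smul, map_smul, smul_comm]
      _ = (∑ i ∈ r.index, Coalgebra.counit (R := k) (r.right i) • r.left i) • (T v w) := by
          rw [Finset.sum_smul]
          exact Finset.sum_congr rfl fun i _ => (smul_assoc _ _ _).symm
      _ = a • (T v w) := by
          have h2 := congrArg (TensorProduct.rid k A) (Coalgebra.sum_tmul_counit_eq r)
          simp only [map_sum, TensorProduct.rid_tmul, one_smul] at h2
          rw [h2]
      _ = a • TensorProduct.lift T (v ⊗ₜ[k] w) := by rw [TensorProduct.lift.tmul]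
  exact LinearMap.congr_fun hext x

end Helpers

/-- **Wigner–Eckart theorem, simply reducible case.**  Let `A` be a Hopf algebra
over an algebraically closed field `k`, let `V`, `W` be finite-dimensional simple `A`-modules,
and suppose `V ⊗ W` (with the tensor-product `A`-action) is the internal direct sum of pairwise
non-isomorphic simple `A`-submodules `SK K`, each constituent occurring exactly once.  Let
`λ_l^K(m, n)` be the Clebsch–Gordan coefficients of the bases `bV`, `bW`, `bK` as in hypothesis
`hCG`: `e_m^V ⊗ e_n^W = ∑_K ∑_l λ_l^K(m,n) e_l^K`.  If `T : V → Hom_k(W, SK L)` is a tensor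
operator (an `A`-module homomorphism for the `δ`-action on `Hom_k(W, SK L)`), then there is a
single scalar `α` (the reduced matrix element), independent of `l, m, n`, such that the matrix
elements of the components `T (e_m^V)` satisfy `T(e_m^V)_{l n} = α * λ_l^L(m, n)`, i.e. they are
proportional to the Clebsch–Gordan coefficients. -/
theorem wigner_eckart_simply_reducible
    (k A V W : Type*) [Field k] [IsAlgClosed k] [Ring A] [HopfAlgebra k A]
    [AddCommGroup V] [Module k V] [Module A V] [IsScalarTower k A V]
    [AddCommGroup W] [Module k W] [Module A W] [IsScalarTower k A W]
    [FiniteDimensional k V] [FiniteDimensional k W]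
    [IsSimpleModule A V] [IsSimpleModule A W]
    -- the decomposition of V ⊗ W into pairwise non-isomorphic simple A-submodules SK K
    (κ : Type*) [Fintype κ] [DecidableEq κ]
    (SK : κ → Submodule A (TensorMod k A V W))
    (hInternal : DirectSum.IsInternal SK)
    (hSimple : ∀ K, IsSimpleModule A (SK K))
    (hNonIso : ∀ K K', K ≠ K' → IsEmpty ((SK K) ≃ₗ[A] (SK K')))
    -- bases and Clebsch-Gordan coefficients
    (μV μW : Type*) [Fintype μV] [Fintype μW] (μK : κ → Type*) [∀ K, Fintype (μK K)]
    (bV : Module.Basis μV k V) (bW : Module.Basis μW k W) (bK : ∀ K, Module.Basis (μK K) k (SK K))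
    (lam : (K : κ) → μK K → μV → μW → k)
    (hCG : ∀ (m : μV) (n : μW),
      tmul' k A V W (bV m) (bW n) =
        ∑ K : κ, ∑ l : μK K, lam K l m n • ((bK K l : SK K) : TensorMod k A V W))
    -- a tensor operator T : V → Hom_k(W, SK L)
    (L : κ) (T : V →ₗ[k] (W →ₗ[k] (SK L)))
    (hT : ∀ (a : A) (v : V), T (a • v) = deltaAction k A W (SK L) a (T v)) :
    ∃ α : k, ∀ (m : μV) (n : μW) (l : μK L),
      (bK L).repr (T (bV m) (bW n)) l = α * lam L l m n := by
  haveI := smulCommClass_of_tower k A (SK L)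
  -- the A-linear map V ⊗ W → SK L induced by the tensor operator T
  let Φ' : TensorMod k A V W →ₗ[A] SK L :=
    { toFun := fun x => TensorProduct.lift T x
      map_add' := fun x y => map_add (TensorProduct.lift T) x y
      map_smul' := fun a x => lift_T_smul T hT a x }
  let ψ : (K : κ) → (SK K →ₗ[A] SK L) := fun K => Φ' ∘ₗ (SK K).subtype
  -- Schur: the restriction of Φ' to SK K vanishes for K ≠ L
  haveI := fun K => hSimple K
  have hzero : ∀ K, K ≠ L → ψ K = 0 := by
    intro K hK
    rcases LinearMap.bijective_or_eq_zero (ψ K) with hb | h0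
    · exact ((hNonIso K L hK).false (LinearEquiv.ofBijective (ψ K) hb)).elim
    · exact h0
  -- Schur: the restriction of Φ' to SK L is a scalar α
  haveI : Module.Finite k (SK L) := Module.Finite.of_basis (bK L)
  haveI : Nontrivial (SK L) := IsSimpleModule.nontrivial A (SK L)
  let φ : Module.End k (SK L) := LinearMap.restrictScalars k (ψ L)
  obtain ⟨α, hα⟩ := Module.End.exists_eigenvalue φ
  obtain ⟨x, hx⟩ := hα.exists_hasEigenvector
  have hφx : ψ L x = α • x := hx.apply_eq_smul
  have hψL : ψ L = α • (LinearMap.id : SK L →ₗ[A] SK L) := by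
    have hf : ψ L - α • (LinearMap.id : SK L →ₗ[A] SK L) = 0 := by
      rcases LinearMap.bijective_or_eq_zero (ψ L - α • (LinearMap.id : SK L →ₗ[A] SK L)) with hb | h0
      · exfalso
        apply hx.2
        apply hb.injective
        simp [LinearMap.sub_apply, hφx]
      · exact h0
    rw [← sub_eq_zero]
    exact hf
  have hL : ∀ u : SK L, Φ' ((u : TensorMod k A V W)) = α • u := by
    intro u
    have := LinearMap.congr_fun hψL u
    simpa [ψ] using this
  have hzero' : ∀ K, K ≠ L → ∀ u : SK K, Φ' ((u : TensorMod k A V W)) = 0 := by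
    intro K hK u
    have := LinearMap.congr_fun (hzero K hK) u
    simpa [ψ] using this
  refine ⟨α, fun m n l => ?_⟩
  have main := congrArg (fun z => Φ' z) (hCG m n)
  simp only [map_sum, LinearMap.map_smul_of_tower] at main
  have hPhi_tmul : Φ' (tmul' k A V W (bV m) (bW n)) = T (bV m) (bW n) :=
    TensorProduct.lift.tmul (bV m) (bW n)
  rw [hPhi_tmul] at main
  have hsum : (∑ K : κ, ∑ l' : μK K, lam K l' m n • Φ' ((bK K l' : SK K) : TensorMod k A V W)) =
      ∑ l' : μK L, lam L l' m n • (α • bK L l') := by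
    rw [Finset.sum_eq_single_of_mem L (Finset.mem_univ L)]
    · exact Finset.sum_congr rfl fun l' _ => by rw [hL (bK L l')]
    · intro K _ hK
      refine Finset.sum_eq_zero fun l' _ => ?_
      rw [hzero' K hK (bK K l'), smul_zero]
  rw [hsum] at main
  rw [main]
  simp only [map_sum, map_smul, Module.Basis.repr_self, Finsupp.smul_single, smul_eq_mul, mul_one]
  rw [Finsupp.finset_sum_apply]
  rw [Finset.sum_eq_single_of_mem l (Finset.mem_univ l)]
  · rw [Finsupp.single_eq_same, mul_comm]
  · intro i _ hi
    exact Finsupp.single_eq_of_ne (Ne.symm hi)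
end

section
/- Let t be a real number with t > 0 and t ≠ 1, and let A = U_t(sl(2)) with its Hopf structure (coproduct Δ and antipode S as specified). Then for every natural number l, the element e^l k^{−l} ∈ A is a highest weight vector of weight t^{2l} for the adjoint action: ad_e(e^l k^{−l}) = 0 and ad_{k^{±1}}(e^l k^{−l}) = t^{±2l} e^l k^{−l}. -/
open TensorProduct

/-- The adjoint action `ad_a(b) = ∑ᵢ a_i^{(1)} b S(a_i^{(2)})` determined by a comultiplication
`Δ` (with `Δ a = ∑ᵢ a_i^{(1)} ⊗ a_i^{(2)}`) and an antipode `S`. -/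
noncomputable def adOp (A : Type*) [Ring A] [Algebra ℝ A] (Δ : A →ₐ[ℝ] A ⊗[ℝ] A)
    (S : A →ₗ[ℝ] A) (a b : A) : A :=
  TensorProduct.lift
    (LinearMap.mk₂ ℝ (fun x y => x * b * S y)
      (fun x x' y => by simp [add_mul])
      (fun c x y => by simp [smul_mul_assoc])
      (fun x y y' => by simp [mul_add])
      (fun c x y => by simp [mul_smul_comm]))
    (Δ a)

/-- Let `t > 0`, `t ≠ 1`, and let `A = U_t(sl(2))`: the real algebra generated
by `e`, `f`, `K`, `K⁻¹ = K'` with the relations `K K' = K' K = 1`, `K e = t² e K`,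
`K f = t⁻² f K`, `e f − f e = (K² − K'²)/(t² − t⁻²)`, with comultiplication `Δ`, counit `ε` and
antipode `S` determined by `Δ(K^{±1}) = K^{±1} ⊗ K^{±1}`, `Δ(e) = e ⊗ K' + K ⊗ e`,
`Δ(f) = f ⊗ K' + K ⊗ f`, `ε(K^{±1}) = 1`, `ε(e) = ε(f) = 0`, `S(K^{±1}) = K^{∓1}`,
`S(e) = −t⁻² e`, `S(f) = −t² f`.  Then for every natural `l`, the element `e^l K'^l` is a
highest weight vector of weight `t^{2l}` for the adjoint action:
`ad_e(e^l K'^l) = 0` and `ad_{K^{±1}}(e^l K'^l) = t^{±2l} e^l K'^l`. -/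
theorem highest_weight_vector_ad
    (t : ℝ) (ht : 0 < t) (ht1 : t ≠ 1)
    (A : Type*) [Ring A] [Algebra ℝ A] (e f K K' : A)
    (hKK' : K * K' = 1) (hK'K : K' * K = 1)
    (hKe : K * e = t ^ (2 : ℤ) • (e * K))
    (hKf : K * f = t ^ (-2 : ℤ) • (f * K))
    (hef : e * f - f * e = (t ^ (2 : ℤ) - t ^ (-2 : ℤ))⁻¹ • (K ^ 2 - K' ^ 2))
    (hgen : Algebra.adjoin ℝ ({e, f, K, K'} : Set A) = ⊤)
    (Δ : A →ₐ[ℝ] A ⊗[ℝ] A)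
    (hΔK : Δ K = K ⊗ₜ[ℝ] K) (hΔK' : Δ K' = K' ⊗ₜ[ℝ] K')
    (hΔe : Δ e = e ⊗ₜ[ℝ] K' + K ⊗ₜ[ℝ] e) (hΔf : Δ f = f ⊗ₜ[ℝ] K' + K ⊗ₜ[ℝ] f)
    (ε : A →ₐ[ℝ] ℝ) (hεK : ε K = 1) (hεK' : ε K' = 1) (hεe : ε e = 0) (hεf : ε f = 0)
    (S : A →ₗ[ℝ] A) (hSmul : ∀ a b : A, S (a * b) = S b * S a) (hS1 : S 1 = 1)
    (hSK : S K = K') (hSK' : S K' = K)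
    (hSe : S e = -(t ^ (-2 : ℤ)) • e) (hSf : S f = -(t ^ (2 : ℤ)) • f)
    (l : ℕ) :
    adOp A Δ S e (e ^ l * K' ^ l) = 0 ∧
      adOp A Δ S K (e ^ l * K' ^ l) = t ^ (2 * l : ℤ) • (e ^ l * K' ^ l) ∧
      adOp A Δ S K' (e ^ l * K' ^ l) = t ^ (-(2 * l : ℤ)) • (e ^ l * K' ^ l) := by

  have ht0 : t ≠ 0 := ne_of_gt ht
  have hcomm : K * K' = K' * K := by rw [hKK', hK'K]
  have hKKl : ∀ n : ℕ, K * K' ^ n = K' ^ n * K := by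
    intro n
    induction n with
    | zero => simp
    | succ n ih =>
      rw [pow_succ, ← mul_assoc, ih, mul_assoc, hcomm, ← mul_assoc]
  have hKel : ∀ n : ℕ, K * e ^ n = t ^ (2 * n : ℤ) • (e ^ n * K) := by
    intro n
    induction n with
    | zero => simp
    | succ n ih =>
      rw [pow_succ, ← mul_assoc, ih, smul_mul_assoc, mul_assoc, hKe, mul_smul_comm, smul_smul,
        ← zpow_add₀ ht0, ← mul_assoc, ← pow_succ]
      congr 1 <;> push_cast <;> ring
  have h22 : t ^ (-2 : ℤ) * t ^ (2 : ℤ) = 1 := by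
    rw [← zpow_add₀ ht0]; norm_num
  have hK'e : K' * e = t ^ (-2 : ℤ) • (e * K') := by
    have h1 : e * K = t ^ (-2 : ℤ) • (K * e) := by
      rw [hKe, smul_smul, h22, one_smul]
    calc K' * e = K' * (e * K) * K' := by rw [mul_assoc, mul_assoc, hKK', mul_one]
      _ = t ^ (-2 : ℤ) • (K' * K * e * K') := by
          rw [h1, mul_smul_comm, smul_mul_assoc, ← mul_assoc]
      _ = t ^ (-2 : ℤ) • (e * K') := by rw [hK'K, one_mul]
  have hK'le : ∀ n : ℕ, K' ^ n * e = t ^ (-(2 * n) : ℤ) • (e * K' ^ n) := by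
    intro n
    induction n with
    | zero => simp
    | succ n ih =>
      rw [pow_succ, mul_assoc, hK'e, mul_smul_comm, ← mul_assoc, ih, smul_mul_assoc, smul_smul,
        ← zpow_add₀ ht0, mul_assoc, ← pow_succ]
      congr 1 <;> push_cast <;> ring
  have hK'el : ∀ n : ℕ, K' * e ^ n = t ^ (-(2 * n) : ℤ) • (e ^ n * K') := by
    intro n
    induction n with
    | zero => simp
    | succ n ih =>
      rw [pow_succ, ← mul_assoc, ih, smul_mul_assoc, mul_assoc, hK'e, mul_smul_comm, smul_smul,
        ← zpow_add₀ ht0, ← mul_assoc, ← pow_succ]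
      congr 1 <;> push_cast <;> ring
  have hKv : K * (e ^ l * K' ^ l) = t ^ (2 * l : ℤ) • (e ^ l * K' ^ l * K) := by
    rw [← mul_assoc, hKel, smul_mul_assoc, mul_assoc, hKKl, ← mul_assoc]
  have hK'v : K' * (e ^ l * K' ^ l) = t ^ (-(2 * l) : ℤ) • (e ^ l * K' ^ l * K') := by
    rw [← mul_assoc, hK'el, smul_mul_assoc]
    congr 1
    rw [mul_assoc, ← pow_succ', pow_succ, ← mul_assoc]
  have hvE : (e ^ l * K' ^ l) * e = t ^ (-(2 * l) : ℤ) • (e ^ (l + 1) * K' ^ l) := by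
    rw [mul_assoc, hK'le, mul_smul_comm, ← mul_assoc, ← pow_succ]
  refine ⟨?_, ?_, ?_⟩
  · -- ad_e
    simp only [adOp, hΔe, map_add, TensorProduct.lift.tmul, LinearMap.mk₂_apply, hSK', hSe]
    have h2 : K * (e ^ l * K' ^ l) * e = t ^ (2 : ℤ) • (e ^ (l + 1) * K' ^ l * K) := by
      rw [hKv, smul_mul_assoc, mul_assoc, hKe, mul_smul_comm, smul_smul, ← mul_assoc, hvE,
        smul_mul_assoc, smul_smul]
      congr 1
      rw [← zpow_add₀ ht0, ← zpow_add₀ ht0]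
      congr 1 <;> push_cast <;> ring
    have h3 : e * (e ^ l * K' ^ l) * K = e ^ (l + 1) * K' ^ l * K := by
      rw [← mul_assoc, ← pow_succ']
    have hneg : -t ^ (-2 : ℤ) * t ^ (2 : ℤ) = -1 := by rw [neg_mul, h22]
    rw [mul_smul_comm, h2, smul_smul, h3, hneg, neg_one_smul, add_neg_cancel]
  · simp only [adOp, hΔK, TensorProduct.lift.tmul, LinearMap.mk₂_apply, hSK]
    rw [hKv, smul_mul_assoc, mul_assoc, hKK', mul_one]
  · simp only [adOp, hΔK', TensorProduct.lift.tmul, LinearMap.mk₂_apply, hSK']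
    rw [hK'v, smul_mul_assoc, mul_assoc, hK'K, mul_one]
end
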